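/- arXiv:1404.4153 — 8 statements merged into one kernel-verified Lean document; each statement's English description precedes it below -/
import Mathlib

section
/- For any integers k > 1 and l > 0 and any non-negative integer t, there exists a positive integer x such that the base-k expansion of x·l has least significant nonzero digit equal to 1, and the gap between the exponent of the least significant nonzero digit and the exponent of the next nonzero digit is greater than t. That is, x·l = k^{w_1} + Σ_{q≥2} s_q k^{w_q} with w_2 - w_1 > t. -/
/-!
Pigeonhole on the powers of `k` modulo `l` gives `l ∣ k ^ i * (k ^ p - 1)` with `p > t`.
Multiplying by `k ^ (t + 1) - 1` gives a multiple of `l` congruent to `k ^ i` modulo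
`k ^ (i + t + 1)`, so its base-`k` digits up to position `i + t` are those of `k ^ i`.
-/

theorem Nat.exists_dvd_pow_mul_pow_sub_one {k l : ℕ} (hk : 0 < k) (hl : l ≠ 0) (s : ℕ) :
    ∃ i p, s ≤ p ∧ l ∣ k ^ i * (k ^ p - 1) := by
  have : NeZero l := ⟨hl⟩
  obtain ⟨a, b, hab, heq⟩ :=
    Finite.exists_ne_map_eq_of_infinite fun j : ℕ => ((k ^ (s * j) : ℕ) : ZMod l)
  wlog hlt : a < b generalizing a b
  · exact this b a hab.symm heq.symm (by omega)
  refine ⟨s * a, s * (b - a), Nat.le_mul_of_pos_right s (by omega), ?_⟩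
  rw [← ZMod.natCast_eq_zero_iff, Nat.cast_mul, Nat.cast_sub (Nat.one_le_pow _ _ hk), mul_sub,
    ← Nat.cast_mul, ← pow_add, ← Nat.mul_add, Nat.add_sub_cancel' hlt.le, Nat.cast_one, mul_one,
    heq, sub_self]

theorem Nat.pow_sub_one_mul_pow_sub_one_mod_pow {b p s : ℕ} (hb : 1 < b) (hs : 0 < s)
    (hsp : s ≤ p) : (b ^ p - 1) * (b ^ s - 1) % b ^ s = 1 := by
  have hbs : 1 < b ^ s := Nat.one_lt_pow hs.ne' hb
  have hbp : ((b ^ p : ℕ) : ZMod (b ^ s)) = 0 :=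
    (ZMod.natCast_eq_zero_iff _ _).2 (pow_dvd_pow b hsp)
  have h : (((b ^ p - 1) * (b ^ s - 1) : ℕ) : ZMod (b ^ s)) = ((1 : ℕ) : ZMod (b ^ s)) := by
    rw [Nat.cast_mul, Nat.cast_sub (Nat.one_le_pow _ _ (by omega)),
      Nat.cast_sub (Nat.one_le_pow _ _ (by omega)), hbp, ZMod.natCast_self]
    simp
  rwa [ZMod.natCast_eq_natCast_iff', Nat.mod_eq_of_lt hbs] at h

theorem Nat.getD_digits_of_mod_pow_eq_pow {b N i t y : ℕ} (hb : 1 < b)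
    (hN : N % b ^ (i + t + 1) = b ^ i) (hy : y ≤ i + t) :
    (Nat.digits b N).getD y 0 = if y = i then 1 else 0 := by
  rw [Nat.getD_digits _ _ hb, ← Nat.mod_mul_right_div_self, ← pow_succ,
    ← Nat.mod_mod_of_dvd N (pow_dvd_pow b (by omega : y + 1 ≤ i + t + 1)), hN]
  rcases lt_trichotomy y i with hyi | rfl | hyi
  · rw [if_neg hyi.ne, Nat.mod_eq_zero_of_dvd (pow_dvd_pow b hyi), Nat.zero_div]
  · rw [if_pos rfl, Nat.mod_eq_of_lt (Nat.pow_lt_pow_succ hb), Nat.div_self (by positivity)]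
  · rw [if_neg hyi.ne', Nat.mod_eq_of_lt (Nat.pow_lt_pow_right hb (by omega)),
      Nat.div_eq_of_lt (Nat.pow_lt_pow_right hb hyi)]

/-- For k > 1, l > 0 and any t, there exists x > 0 such that the base-k
expansion of x*l has least significant nonzero digit equal to 1 (at some exponent w₁),
and all digits at exponents w₁+1, …, w₁+t vanish (so the gap to the next nonzero
exponent exceeds t). -/
theorem stmt_0 (k l t : ℕ) (hk : 1 < k) (hl : 0 < l) :
    ∃ x : ℕ, 0 < x ∧ ∃ w₁ : ℕ,
      (Nat.digits k (x * l)).getD w₁ 0 = 1 ∧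
      (∀ y, y < w₁ → (Nat.digits k (x * l)).getD y 0 = 0) ∧
      (∀ y, w₁ < y → y ≤ w₁ + t → (Nat.digits k (x * l)).getD y 0 = 0) := by
  obtain ⟨i, p, hp, hdvd⟩ := Nat.exists_dvd_pow_mul_pow_sub_one (k := k) (by omega) hl.ne' (t + 1)
  set n := (k ^ p - 1) * (k ^ (t + 1) - 1)
  have hn : n % k ^ (t + 1) = 1 := Nat.pow_sub_one_mul_pow_sub_one_mod_pow hk t.succ_pos hp
  obtain ⟨x, hx⟩ : l ∣ k ^ i * n := by
    rw [← mul_assoc]; exact dvd_mul_of_dvd_left hdvd _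
  have hxl : x * l = k ^ i * n := by rw [hx, mul_comm]
  have hN : x * l % k ^ (i + t + 1) = k ^ i := by
    rw [hxl, add_assoc, pow_add, Nat.mul_mod_mul_left, hn, mul_one]
  have hx0 : 0 < x := by
    refine Nat.pos_of_ne_zero fun h => ?_
    rw [h, zero_mul, Nat.zero_mod] at hN
    exact (pow_pos (by omega) i).ne hN
  refine ⟨x, hx0, i, ?_, fun y hy => ?_, fun y hy hyt => ?_⟩ <;>
    rw [Nat.getD_digits_of_mod_pow_eq_pow hk hN (by omega)]
  · exact if_pos rfl
  · exact if_neg hy.ne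
  · exact if_neg hy.ne'
end

section
/- For any integers k > 1, l > 0 and any non-negative integers t and t', there exist positive integers x and X such that both x·l and X·l have base-k expansions whose least significant nonzero digit is 1, occurring at the same exponent (i.e., w_{xl}(1) = w_{Xl}(1)), with the gap to the next nonzero digit of x·l exceeding t and the gap to the next nonzero digit of X·l exceeding t'. -/
/-!
By pigeonhole on `k ^ n mod l`, some `k ^ i * (k ^ d - 1)` with `d > 0` is a multiple of `l`.
For every `t`, the number `m = (k ^ (d * (t + 1)) - 1) ^ 2` is a multiple of `k ^ d - 1` and is
`≡ 1 mod k ^ (t + 1)`, so `k ^ i * m` is a multiple of `l` whose base-`k` expansion is zero below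
position `i`, has a `1` at position `i`, and zeros in the next `t` positions. The position `i`
does not depend on `t`, so the same `i` serves for `t` and `t'`.
-/

open Nat

/-- In the paper's notation: `w_n(1) = w`, with digit `1` there, and the gap to the next nonzero
digit of `n` exceeds `t`. -/
def OneDigitWithGap (k n w t : ℕ) : Prop :=
  (digits k n).getD w 0 = 1 ∧
    (∀ y, y < w → (digits k n).getD y 0 = 0) ∧
    (∀ y, w < y → y ≤ w + t → (digits k n).getD y 0 = 0)

namespace OneDigitWithGap

theorem ne_zero {k n w t : ℕ} (h : OneDigitWithGap k n w t) : n ≠ 0 := by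
  rintro rfl
  simpa using h.1

end OneDigitWithGap

section Digits

variable {k : ℕ}

theorem getD_digits_pow_mul_of_lt (hk : 1 < k) {w y : ℕ} (m : ℕ) (hy : y < w) :
    (digits k (k ^ w * m)).getD y 0 = 0 := by
  obtain ⟨c, rfl⟩ : ∃ c, w = y + (c + 1) := ⟨w - y - 1, by omega⟩
  rw [getD_digits _ _ hk, pow_add, mul_assoc, Nat.mul_div_cancel_left _ (by positivity),
    pow_succ, mul_assoc, mul_left_comm, Nat.mul_mod_right]

theorem getD_digits_pow_mul_add (hk : 1 < k) (w j m : ℕ) :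
    (digits k (k ^ w * m)).getD (w + j) 0 = (digits k m).getD j 0 := by
  rw [getD_digits _ _ hk, getD_digits _ _ hk, pow_add, ← Nat.div_div_eq_div_mul,
    Nat.mul_div_cancel_left _ (by positivity)]

theorem getD_digits_eq_of_modEq (hk : 1 < k) {m n s j : ℕ} (h : m ≡ n [MOD k ^ s]) (hj : j < s) :
    (digits k m).getD j 0 = (digits k n).getD j 0 := by
  have hdvd : k ^ j * k ∣ k ^ s := by rw [← pow_succ]; exact Nat.pow_dvd_pow k hj
  rw [getD_digits _ _ hk, getD_digits _ _ hk, ← Nat.mod_mul_right_div_self,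
    ← Nat.mod_mul_right_div_self n, ← Nat.mod_mod_of_dvd m hdvd, ← Nat.mod_mod_of_dvd n hdvd, h]

theorem oneDigitWithGap_pow_mul (hk : 1 < k) {m t : ℕ} (hm : m ≡ 1 [MOD k ^ (t + 1)]) (w : ℕ) :
    OneDigitWithGap k (k ^ w * m) w t := by
  have hdigit : ∀ j, j ≤ t → (digits k (k ^ w * m)).getD (w + j) 0 = (digits k 1).getD j 0 :=
    fun j hj => by
      rw [getD_digits_pow_mul_add hk, getD_digits_eq_of_modEq hk hm (by omega)]
  rw [digits_of_lt k 1 one_ne_zero hk] at hdigit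
  refine ⟨by simpa using hdigit 0 (Nat.zero_le t), fun y hy => getD_digits_pow_mul_of_lt hk m hy,
    fun y hwy hyt => ?_⟩
  obtain ⟨j, rfl⟩ : ∃ j, y = w + (j + 1) := ⟨y - w - 1, by omega⟩
  simpa using hdigit (j + 1) (by omega)

end Digits

theorem exists_pow_mul_pow_sub_one_dvd (k : ℕ) {l : ℕ} (hl : 0 < l) :
    ∃ i d, 0 < d ∧ l ∣ k ^ i * (k ^ d - 1) := by
  obtain ⟨i, j, hij, hmod⟩ := (Set.finite_lt_nat l).exists_lt_map_eq_of_forall_mem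
    (f := fun n => k ^ n % l) fun n => Nat.mod_lt _ hl
  refine ⟨i, j - i, by omega, Nat.dvd_of_mod_eq_zero ?_⟩
  rw [Nat.mul_sub_one, ← pow_add, Nat.add_sub_cancel' hij.le]
  exact Nat.sub_mod_eq_zero_of_mod_eq hmod.symm

theorem Nat.sub_one_sq_modEq_one {a : ℕ} (ha : 0 < a) : (a - 1) ^ 2 ≡ 1 [MOD a] := by
  obtain ⟨b, rfl⟩ : ∃ b, a = b + 1 := ⟨a - 1, by omega⟩
  exact (Nat.modEq_iff_dvd).mpr ⟨1 - b, by push_cast; ring⟩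

theorem exists_sub_one_dvd_modEq_one {k d : ℕ} (hk : 0 < k) (hd : 0 < d) (s : ℕ) :
    ∃ m, k ^ d - 1 ∣ m ∧ m ≡ 1 [MOD k ^ s] := by
  refine ⟨(k ^ (d * s) - 1) ^ 2, ?_, ?_⟩
  · have := Nat.sub_dvd_pow_sub_pow (k ^ d) 1 s
    rw [one_pow, ← pow_mul] at this
    exact this.trans (Dvd.intro_left _ (sq _).symm)
  · refine (Nat.sub_one_sq_modEq_one (by positivity)).of_dvd (Nat.pow_dvd_pow k ?_)
    exact Nat.le_mul_of_pos_left s hd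

theorem exists_mul_oneDigitWithGap {k l i d : ℕ} (hk : 1 < k) (hd : 0 < d)
    (hl : l ∣ k ^ i * (k ^ d - 1)) (t : ℕ) : ∃ x, 0 < x ∧ OneDigitWithGap k (x * l) i t := by
  obtain ⟨m, hdm, hm⟩ := exists_sub_one_dvd_modEq_one (zero_lt_one.trans hk) hd (t + 1)
  obtain ⟨x, hx⟩ := hl.trans (mul_dvd_mul_left (k ^ i) hdm)
  have hgap := oneDigitWithGap_pow_mul hk hm i
  rw [hx, mul_comm] at hgap
  exact ⟨x, Nat.pos_of_ne_zero (left_ne_zero_of_mul hgap.ne_zero), hgap⟩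

/-- For k > 1, l > 0 and any t, t', there exist x, X > 0 such that both
x*l and X*l have base-k expansions whose least significant nonzero digit is 1,
occurring at the same exponent w₁, with the gap to the next nonzero digit of x*l
exceeding t and the gap to the next nonzero digit of X*l exceeding t'. -/
theorem stmt_1 (k l t t' : ℕ) (hk : 1 < k) (hl : 0 < l) :
    ∃ x X : ℕ, 0 < x ∧ 0 < X ∧ ∃ w₁ : ℕ,
      (Nat.digits k (x * l)).getD w₁ 0 = 1 ∧
      (∀ y, y < w₁ → (Nat.digits k (x * l)).getD y 0 = 0) ∧
      (∀ y, w₁ < y → y ≤ w₁ + t → (Nat.digits k (x * l)).getD y 0 = 0) ∧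
      (Nat.digits k (X * l)).getD w₁ 0 = 1 ∧
      (∀ y, y < w₁ → (Nat.digits k (X * l)).getD y 0 = 0) ∧
      (∀ y, w₁ < y → y ≤ w₁ + t' → (Nat.digits k (X * l)).getD y 0 = 0) := by
  obtain ⟨i, d, hd, hdvd⟩ := exists_pow_mul_pow_sub_one_dvd k hl
  obtain ⟨x, hx, hxi, hxlow, hxgap⟩ := exists_mul_oneDigitWithGap hk hd hdvd t
  obtain ⟨X, hX, hXdigits⟩ := exists_mul_oneDigitWithGap hk hd hdvd t'
  exact ⟨x, X, hx, hX, i, hxi, hxlow, hxgap, hXdigits⟩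
end

section
/- Fix integers k, L > 1 and a map κ : {1,…,k-1} × ℕ → {0,…,L-1}. Define b : ℕ → ℂ by b(n) = Π_q exp(2πi·κ(s_q, w_q)/L), where n = Σ_q s_q k^{w_q} is the base-k expansion of n (and b(0) = 1). Then for |z| < 1, the power series Σ_{n≥0} b(n) z^n equals the absolutely convergent infinite product Π_{y≥0} (1 + Σ_{s=1}^{k-1} exp(2πi·κ(s,y)/L) z^{s·k^y}). -/
open scoped BigOperators

/-- The unit-valued sequence b(n) = ∏_q exp(2πi·κ(s_q,w_q)/L), the product taken over
the nonzero digits s_q (at exponents w_q) of the base-k expansion of n; b(0) = 1. -/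
noncomputable def tmSeq (k L : ℕ) (κ : ℕ → ℕ → ℕ) (n : ℕ) : ℂ :=
  ∏ y ∈ Finset.range (Nat.digits k n).length,
    if (Nat.digits k n).getD y 0 ≠ 0 then
      Complex.exp (2 * Real.pi * Complex.I * (κ ((Nat.digits k n).getD y 0) y) / L)
    else 1

/-!
Write `w(s,y) = exp(2πiκ(s,y)/L)` for a digit `s ≠ 0` and `w(0,y) = 1`. Splitting off the lowest
digit, `n = r + k m`, gives `b(n) = w(r,0) · b'(m)`, where `b'` is the same sequence for the
shifted map `κ'(s,y) = κ(s,y+1)`. By induction on `N` this expands the partial sum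
`∑_{n < k^N} b(n) zⁿ` into the partial product `∏_{y < N} ∑_{s < k} w(s,y) z^(s kʸ)`.
Since `|b(n)| = 1` and the factors are `1 + O(|z|^y)`, both sides converge for `|z| < 1`, and the
partial sums along `k^N` converge to the product.
-/

open Finset Filter

lemma Finset.sum_range_mul_eq_sum_sum {M : Type*} [AddCommMonoid M] (f : ℕ → M) (a b : ℕ) :
    ∑ n ∈ range (a * b), f n = ∑ m ∈ range b, ∑ r ∈ range a, f (r + a * m) := by
  induction b with
  | zero => simp
  | succ b ih =>
    rw [Nat.mul_succ, sum_range_add, ih, sum_range_succ]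
    simp only [add_comm]

lemma Complex.norm_exp_two_pi_I_mul_natCast_div (m L : ℕ) :
    ‖Complex.exp (2 * Real.pi * Complex.I * m / L)‖ = 1 := by
  have h : (2 * Real.pi * Complex.I * m / L : ℂ) = ((2 * Real.pi * m / L : ℝ) : ℂ) * Complex.I := by
    push_cast; ring
  rw [h, Complex.norm_exp_ofReal_mul_I]

section DigitWeight

variable (L : ℕ) (κ : ℕ → ℕ → ℕ)

noncomputable def digitWeight (s y : ℕ) : ℂ :=
  if s ≠ 0 then Complex.exp (2 * Real.pi * Complex.I * (κ s y) / L) else 1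

lemma norm_digitWeight (s y : ℕ) : ‖digitWeight L κ s y‖ = 1 := by
  unfold digitWeight
  split_ifs
  · exact Complex.norm_exp_two_pi_I_mul_natCast_div _ _
  · exact norm_one

lemma tmSeq_eq_prod_digitWeight (k n : ℕ) :
    tmSeq k L κ n = ∏ y ∈ range (Nat.digits k n).length,
      digitWeight L κ ((Nat.digits k n).getD y 0) y := rfl

lemma norm_tmSeq (k n : ℕ) : ‖tmSeq k L κ n‖ = 1 := by
  rw [tmSeq_eq_prod_digitWeight, norm_prod]
  exact prod_eq_one fun y _ => norm_digitWeight L κ _ y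

lemma tmSeq_add_mul {k : ℕ} (hk : 1 < k) {r : ℕ} (hr : r < k) (m : ℕ) :
    tmSeq k L κ (r + k * m) = digitWeight L κ r 0 * tmSeq k L (fun s y => κ s (y + 1)) m := by
  by_cases h0 : r = 0 ∧ m = 0
  · obtain ⟨rfl, rfl⟩ := h0
    simp [tmSeq, digitWeight]
  rw [tmSeq_eq_prod_digitWeight, Nat.digits_add k hk r m hr (not_and_or.mp h0), List.length_cons,
    prod_range_succ', mul_comm]
  simp [tmSeq_eq_prod_digitWeight, digitWeight]

lemma sum_range_digitWeight_mul_pow {k : ℕ} (hk : 0 < k) (y : ℕ) (z : ℂ) :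
    ∑ s ∈ range k, digitWeight L κ s y * z ^ (s * k ^ y) =
      1 + ∑ s ∈ Icc 1 (k - 1), Complex.exp (2 * Real.pi * Complex.I * (κ s y) / L) *
        z ^ (s * k ^ y) := by
  rw [range_eq_Ico, sum_eq_sum_Ico_succ_bot hk,
    ← Icc_sub_one_right_eq_Ico_of_not_isMin (not_isMin_iff_ne_bot.mpr hk.ne')]
  congr 1
  · simp [digitWeight]
  · refine sum_congr rfl fun s hs => ?_
    rw [digitWeight, if_pos (Nat.one_le_iff_ne_zero.mp (mem_Ico.mp hs).1)]

lemma sum_range_pow_tmSeq_mul_pow {k : ℕ} (hk : 1 < k) (N : ℕ) (z : ℂ) :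
    ∑ n ∈ range (k ^ N), tmSeq k L κ n * z ^ n =
      ∏ y ∈ range N, ∑ s ∈ range k, digitWeight L κ s y * z ^ (s * k ^ y) := by
  induction N generalizing κ z with
  | zero => simp [tmSeq]
  | succ N ih =>
    calc ∑ n ∈ range (k ^ (N + 1)), tmSeq k L κ n * z ^ n
        = ∑ m ∈ range (k ^ N), ∑ r ∈ range k,
            digitWeight L κ r 0 * z ^ r * (tmSeq k L (fun s y => κ s (y + 1)) m * (z ^ k) ^ m) := by
          rw [pow_succ', sum_range_mul_eq_sum_sum]
          refine sum_congr rfl fun m _ => sum_congr rfl fun r hr => ?_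
          rw [tmSeq_add_mul L κ hk (mem_range.mp hr), pow_add, pow_mul]
          ring
      _ = (∑ r ∈ range k, digitWeight L κ r 0 * z ^ r) *
            ∏ y ∈ range N, ∑ s ∈ range k,
              digitWeight L (fun s y => κ s (y + 1)) s y * (z ^ k) ^ (s * k ^ y) := by
          rw [← ih (fun s y => κ s (y + 1)) (z ^ k), mul_sum]
          exact sum_congr rfl fun m _ => (sum_mul _ _ _).symm
      _ = _ := by
          rw [prod_range_succ', mul_comm]
          simp only [← pow_mul, pow_zero, mul_one]
          congr 1
          refine prod_congr rfl fun y _ => sum_congr rfl fun s _ => ?_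
          exact congrArg (digitWeight L κ s (y + 1) * z ^ · : ℕ → ℂ) (by ring)

lemma summable_tmSeq_mul_pow (k : ℕ) {z : ℂ} (hz : ‖z‖ < 1) :
    Summable fun n => tmSeq k L κ n * z ^ n :=
  Summable.of_norm_bounded (summable_geometric_of_lt_one (norm_nonneg z) hz) fun n => by
    rw [norm_mul, norm_tmSeq, one_mul, norm_pow]

lemma norm_sum_Icc_exp_mul_pow_le {k : ℕ} (hk : 1 < k) {z : ℂ} (hz : ‖z‖ ≤ 1) (y : ℕ) :
    ‖∑ s ∈ Icc 1 (k - 1), Complex.exp (2 * Real.pi * Complex.I * (κ s y) / L) * z ^ (s * k ^ y)‖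
      ≤ (k - 1 : ℕ) * ‖z‖ ^ y := by
  calc _ ≤ ∑ s ∈ Icc 1 (k - 1),
        ‖Complex.exp (2 * Real.pi * Complex.I * (κ s y) / L) * z ^ (s * k ^ y)‖ := norm_sum_le _ _
    _ ≤ ∑ _s ∈ Icc 1 (k - 1), ‖z‖ ^ y := by
      refine sum_le_sum fun s hs => ?_
      rw [norm_mul, Complex.norm_exp_two_pi_I_mul_natCast_div, one_mul, norm_pow]
      have hy : y ≤ s * k ^ y :=
        (Nat.lt_pow_self hk).le.trans (Nat.le_mul_of_pos_left _ (mem_Icc.mp hs).1)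
      exact pow_le_pow_of_le_one (norm_nonneg z) hz hy
    _ = (k - 1 : ℕ) * ‖z‖ ^ y := by simp

lemma multipliable_one_add_sum_Icc_exp_mul_pow {k : ℕ} (hk : 1 < k) {z : ℂ} (hz : ‖z‖ < 1) :
    Multipliable fun y => 1 + ∑ s ∈ Icc 1 (k - 1),
      Complex.exp (2 * Real.pi * Complex.I * (κ s y) / L) * z ^ (s * k ^ y) :=
  multipliable_one_add_of_summable <|
    ((summable_geometric_of_lt_one (norm_nonneg z) hz).mul_left _).of_nonneg_of_le
      (fun _ => norm_nonneg _) (norm_sum_Icc_exp_mul_pow_le L κ hk hz.le)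

end DigitWeight

theorem stmt_6_general (k L : ℕ) (hk : 1 < k) (κ : ℕ → ℕ → ℕ) (z : ℂ) (hz : ‖z‖ < 1) :
    Summable (fun n : ℕ => tmSeq k L κ n * z ^ n) ∧
    Multipliable (fun y : ℕ => 1 + ∑ s ∈ Finset.Icc 1 (k - 1),
        Complex.exp (2 * Real.pi * Complex.I * (κ s y) / L) * z ^ (s * k ^ y)) ∧
    (∑' n : ℕ, tmSeq k L κ n * z ^ n) =
      ∏' y : ℕ, (1 + ∑ s ∈ Finset.Icc 1 (k - 1),
        Complex.exp (2 * Real.pi * Complex.I * (κ s y) / L) * z ^ (s * k ^ y)) := by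
  have hsum := summable_tmSeq_mul_pow L κ k hz
  have hmul := multipliable_one_add_sum_Icc_exp_mul_pow L κ hk hz
  refine ⟨hsum, hmul, tendsto_nhds_unique ?_ hmul.hasProd.tendsto_prod_nat⟩
  have hpartial := hsum.hasSum.tendsto_sum_nat.comp (tendsto_pow_atTop_atTop_of_one_lt hk)
  refine hpartial.congr fun N => ?_
  simp only [Function.comp_apply, sum_range_pow_tmSeq_mul_pow L κ hk,
    sum_range_digitWeight_mul_pow L κ (zero_lt_one.trans hk)]

/-- For |z| < 1 the generating series Σ b(n) zⁿ converges and equals the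
(multipliable) infinite product ∏_y (1 + Σ_{s=1}^{k-1} exp(2πi·κ(s,y)/L) z^{s·kʸ}). -/
theorem stmt_6 (k L : ℕ) (hk : 1 < k) (hL : 1 < L) (κ : ℕ → ℕ → ℕ)
    (hκ : ∀ s y, κ s y < L) (z : ℂ) (hz : ‖z‖ < 1) :
    Summable (fun n : ℕ => tmSeq k L κ n * z ^ n) ∧
    Multipliable (fun y : ℕ => 1 + ∑ s ∈ Finset.Icc 1 (k - 1),
        Complex.exp (2 * Real.pi * Complex.I * (κ s y) / L) * z ^ (s * k ^ y)) ∧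
    (∑' n : ℕ, tmSeq k L κ n * z ^ n) =
      ∏' y : ℕ, (1 + ∑ s ∈ Finset.Icc 1 (k - 1),
        Complex.exp (2 * Real.pi * Complex.I * (κ s y) / L) * z ^ (s * k ^ y)) :=
  stmt_6_general k L hk κ z hz
end

section
/- Let k, L > 1 and κ : {1,…,k-1} × ℕ → ℤ/L, and define a(n) ≡ Σ_q κ(s_q, w_q) (mod L) from the base-k digits of n. If there exists A ∈ ℕ such that κ(s, A+y) ≡ κ(1,A)·s·k^y (mod L) for all s ∈ {1,…,k-1} and all y ∈ ℕ, then the sequence (a(n))_{n≥0} is periodic with period L·k^A, i.e., a(n + L·k^A) = a(n) for all n ≥ 0. -/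
open scoped BigOperators

/-- The generalized Thue–Morse sequence of type (L,k,κ):
a(n) = Σ_q κ(s_q, w_q) in ℤ/L, over the nonzero base-k digits of n. -/
def gtm (k L : ℕ) (κ : ℕ → ℕ → ZMod L) (n : ℕ) : ZMod L :=
  ∑ y ∈ Finset.range (Nat.digits k n).length,
    if (Nat.digits k n).getD y 0 ≠ 0 then κ ((Nat.digits k n).getD y 0) y else 0

/-!
Split the base-`k` digits of `n` at position `A` into those of `n % k ^ A` and those of
`n / k ^ A`. The hypothesis makes `κ` linear in the digit from position `A` on, so the upper
digits contribute `κ(1, A) · (n / k ^ A)`. Adding `L · k ^ A` to `n` leaves `n % k ^ A` unchanged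
and adds `L` to `n / k ^ A`, which changes the contribution by `κ(1, A) · L = 0` in `ℤ/L`.
-/

section KappaSum

variable {R : Type*} [AddCommMonoid R] (κ : ℕ → ℕ → R)

def kappaSum : ℕ → List ℕ → R
  | _, [] => 0
  | j, a :: l => (if a ≠ 0 then κ a j else 0) + kappaSum (j + 1) l

theorem kappaSum_eq_sum_range (j : ℕ) (l : List ℕ) :
    kappaSum κ j l = ∑ y ∈ Finset.range l.length,
      if l.getD y 0 ≠ 0 then κ (l.getD y 0) (j + y) else 0 := by
  induction l generalizing j with
  | nil => rfl
  | cons a l ih =>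
    rw [kappaSum, ih, List.length_cons, Finset.sum_range_succ', add_comm]
    simp only [List.getD_cons_succ, List.getD_cons_zero, add_zero, add_right_comm j 1, add_assoc]

theorem kappaSum_append (j : ℕ) (l₁ l₂ : List ℕ) :
    kappaSum κ j (l₁ ++ l₂) = kappaSum κ j l₁ + kappaSum κ (j + l₁.length) l₂ := by
  induction l₁ generalizing j with
  | nil => simp [kappaSum]
  | cons a l ih => simp [kappaSum, ih, add_assoc, add_comm 1]

theorem kappaSum_replicate_zero (j p : ℕ) : kappaSum κ j (List.replicate p 0) = 0 := by
  induction p generalizing j with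
  | zero => rfl
  | succ p ih => simp [List.replicate_succ, kappaSum, ih]

theorem kappaSum_digits_mod_add_div {k : ℕ} (hk : 1 < k) (A n : ℕ) :
    kappaSum κ 0 (Nat.digits k n) =
      kappaSum κ 0 (Nat.digits k (n % k ^ A)) + kappaSum κ A (Nat.digits k (n / k ^ A)) := by
  rcases Nat.eq_zero_or_pos (n / k ^ A) with hdiv | hdiv
  · rw [Nat.mod_eq_of_lt ((Nat.div_eq_zero_iff_lt (by positivity)).mp hdiv), hdiv]
    simp [kappaSum]
  · have hlen : (Nat.digits k (n % k ^ A)).length ≤ A :=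
      (Nat.digits_length_le_iff hk _).mpr (Nat.mod_lt _ (by positivity))
    have hdigits := Nat.digits_append_zeroes_append_digits
      (k := A - (Nat.digits k (n % k ^ A)).length) (n := n % k ^ A) hk hdiv
    rw [Nat.add_sub_cancel' hlen, Nat.mod_add_div] at hdigits
    rw [← hdigits, kappaSum_append, kappaSum_append, kappaSum_replicate_zero,
      List.length_append, List.length_replicate, zero_add, add_zero, Nat.add_sub_cancel' hlen]

end KappaSum

theorem gtm_eq_kappaSum (k L : ℕ) (κ : ℕ → ℕ → ZMod L) (n : ℕ) :
    gtm k L κ n = kappaSum κ 0 (Nat.digits k n) := by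
  simp only [gtm, kappaSum_eq_sum_range, zero_add]

theorem kappaSum_digits_of_linear {R : Type*} [CommSemiring R] {k : ℕ} (hk : 1 < k)
    (κ : ℕ → ℕ → R) (A : ℕ) (c : R)
    (hκ : ∀ s y : ℕ, 1 ≤ s → s ≤ k - 1 → κ s (A + y) = c * (s : R) * (k : R) ^ y) (d : ℕ) :
    kappaSum κ A (Nat.digits k d) = c * (d : R) := by
  suffices h : ∀ (j : ℕ) (l : List ℕ), (∀ a ∈ l, a < k) →
      kappaSum κ (A + j) l = c * (k : R) ^ j * Nat.ofDigits (k : R) l by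
    conv_rhs => rw [← Nat.ofDigits_digits k d, Nat.coe_ofDigits]
    simpa using h 0 _ (fun _ ↦ Nat.digits_lt_base hk)
  intro j l hl
  induction l generalizing j with
  | nil => simp [kappaSum, Nat.ofDigits]
  | cons a l ih =>
    have hdigit : (if a ≠ 0 then κ a (A + j) else 0) = c * (a : R) * (k : R) ^ j := by
      split_ifs with ha
      · exact hκ a j (Nat.one_le_iff_ne_zero.mpr ha)
          (Nat.le_sub_one_of_lt (hl a List.mem_cons_self))
      · simp [not_not.mp ha]
    rw [kappaSum, hdigit, add_assoc, ih (j + 1) (fun b hb ↦ hl b (List.mem_cons_of_mem a hb)),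
      Nat.ofDigits]
    ring

theorem stmt_10_general (k L : ℕ) (hk : 1 < k) (κ : ℕ → ℕ → ZMod L) (A : ℕ)
    (hκ : ∀ s y : ℕ, 1 ≤ s → s ≤ k - 1 →
      κ s (A + y) = κ 1 A * (s : ZMod L) * (k : ZMod L) ^ y) :
    ∀ n : ℕ, gtm k L κ (n + L * k ^ A) = gtm k L κ n := by
  intro n
  have hpow : 0 < k ^ A := by positivity
  rw [gtm_eq_kappaSum, gtm_eq_kappaSum, kappaSum_digits_mod_add_div κ hk A,
    kappaSum_digits_mod_add_div κ hk A n, Nat.add_mul_mod_self_right,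
    Nat.add_mul_div_right _ _ hpow, kappaSum_digits_of_linear hk κ A _ hκ,
    kappaSum_digits_of_linear hk κ A _ hκ, Nat.cast_add, ZMod.natCast_self, add_zero]

/-- if κ(s,A+y) ≡ κ(1,A)·s·kʸ (mod L) for all digits s and all y,
then the generalized Thue–Morse sequence is periodic with period L·k^A. -/
theorem stmt_10 (k L : ℕ) (hk : 1 < k) (hL : 1 < L) (κ : ℕ → ℕ → ZMod L) (A : ℕ)
    (hκ : ∀ s y : ℕ, 1 ≤ s → s ≤ k - 1 →
      κ s (A + y) = κ 1 A * (s : ZMod L) * (k : ZMod L) ^ y) :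
    ∀ n : ℕ, gtm k L κ (n + L * k ^ A) = gtm k L κ n :=
  stmt_10_general k L hk κ A hκ
end

section
/- Let k, L > 1, κ : {1,…,k-1} × ℕ → ℤ/L, and a(n) ≡ Σ_q κ(s_q, w_q) (mod L) from the base-k digits of n. Then (a(n))_{n≥0} is ultimately periodic if and only if there exists A ∈ ℕ with κ(s, A+y) ≡ κ(1,A)·s·k^y (mod L) for all s ∈ {1,…,k-1} and y ∈ ℕ. -/
/-!
If `κ (s, A + y) = κ (1, A) * s * k ^ y`, the digits from position `A` on contribute
`κ (1, A) * (n / k ^ A)`, a linear function of `n / k ^ A`, so `k ^ A * L` is a period.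

Conversely, if `a = gtm k L κ` is eventually `l`-periodic, it depends, far out, only on
`n mod l`. Powers of `k` are eventually periodic mod `l`, say `k ^ (W + p) ≡ k ^ W`, so for large
`W` the number `r * k ^ W` is congruent to `k ^ W + k ^ (W + p) + ⋯ + k ^ (W + (r - 1) p)`, whose
nonzero digits are all `1` and do not interact. Comparing values gives
`a (r * k ^ W) = r * κ (1, W)`; the case `r = s < k` yields `κ (s, W) = s * κ (1, W)`, and
`r = k` yields `κ (1, W + 1) = k * κ (1, W)`.
-/

open scoped BigOperators

section Digits

variable {k L : ℕ}

@[simp]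
lemma gtm_zero (κ : ℕ → ℕ → ZMod L) : gtm k L κ 0 = 0 := by
  simp [gtm]

lemma gtm_of_lt (κ : ℕ → ℕ → ZMod L) {s : ℕ} (hs0 : s ≠ 0) (hsk : s < k) :
    gtm k L κ s = κ s 0 := by
  simp [gtm, Nat.digits_of_lt k s hs0 hsk, hs0]

lemma gtm_add_mul (κ : ℕ → ℕ → ZMod L) (hk : 1 < k) {d : ℕ} (hdk : d < k) (n : ℕ) :
    gtm k L κ (d + k * n) = gtm k L κ d + gtm k L (fun s y => κ s (y + 1)) n := by
  have hdigit : gtm k L κ d = if d ≠ 0 then κ d 0 else 0 := by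
    rcases eq_or_ne d 0 with rfl | hd0
    · simp
    · simp [gtm_of_lt κ hd0 hdk, hd0]
  by_cases hdn : d = 0 ∧ n = 0
  · simp [hdn]
  rw [gtm, Nat.digits_add k hk d n hdk (by tauto), List.length_cons, Finset.sum_range_succ',
    hdigit, add_comm]
  simp only [List.getD_cons_succ, List.getD_cons_zero]
  rfl

lemma gtm_add_pow_mul (κ : ℕ → ℕ → ZMod L) (hk : 1 < k) {m W : ℕ} (hm : m < k ^ W) (n : ℕ) :
    gtm k L κ (m + k ^ W * n) = gtm k L κ m + gtm k L (fun s y => κ s (y + W)) n := by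
  induction W generalizing m κ with
  | zero => simp_all
  | succ W ih =>
    have hdk : m % k < k := Nat.mod_lt m (by omega)
    have hq : m / k < k ^ W := Nat.div_lt_of_lt_mul (by rwa [← pow_succ'])
    have hm_eq : m = m % k + k * (m / k) := (Nat.mod_add_div m k).symm
    have hmn : m + k ^ (W + 1) * n = m % k + k * (m / k + k ^ W * n) := by
      conv_lhs => rw [hm_eq]
      ring
    rw [hmn, gtm_add_mul κ hk hdk, ih _ hq, ← add_assoc, ← gtm_add_mul κ hk hdk, ← hm_eq]
    rfl

lemma gtm_add_pow_mul_digit (κ : ℕ → ℕ → ZMod L) (hk : 1 < k) {m W s : ℕ} (hm : m < k ^ W)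
    (hs0 : s ≠ 0) (hsk : s < k) : gtm k L κ (m + k ^ W * s) = gtm k L κ m + κ s W := by
  rw [gtm_add_pow_mul κ hk hm, gtm_of_lt _ hs0 hsk, zero_add]

lemma gtm_pow_mul_digit (κ : ℕ → ℕ → ZMod L) (hk : 1 < k) (W : ℕ) {s : ℕ}
    (hs0 : s ≠ 0) (hsk : s < k) : gtm k L κ (k ^ W * s) = κ s W := by
  simpa using gtm_add_pow_mul_digit κ hk (pow_pos (by omega) W) hs0 hsk

lemma gtm_eq_mul_of_linear (hk : 1 < k) {κ : ℕ → ℕ → ZMod L} {c : ZMod L}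
    (hκ : ∀ s y, s ≠ 0 → s < k → κ s y = c * s * k ^ y) (n : ℕ) : gtm k L κ n = c * n := by
  induction n using Nat.strong_induction_on generalizing κ c with
  | _ n ih =>
    rcases eq_or_ne n 0 with rfl | hn0
    · simp
    have hdk : n % k < k := Nat.mod_lt n (by omega)
    have hdigit : gtm k L κ (n % k) = c * (n % k : ℕ) := by
      rcases eq_or_ne (n % k) 0 with h | h
      · simp [h]
      · simp [gtm_of_lt κ h hdk, hκ _ 0 h hdk]
    have hshift : gtm k L (fun s y => κ s (y + 1)) (n / k) = c * k * (n / k : ℕ) :=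
      ih _ (Nat.div_lt_self (Nat.pos_of_ne_zero hn0) hk) (fun s y hs0 hsk => by
        rw [hκ s _ hs0 hsk]; ring)
    conv_lhs => rw [← Nat.mod_add_div n k]
    rw [gtm_add_mul κ hk hdk, hdigit, hshift]
    conv_rhs => rw [← Nat.mod_add_div n k]
    push_cast; ring

end Digits

lemma eq_of_modEq_of_periodic_from {α : Type*} {a : ℕ → α} {N l : ℕ}
    (h : ∀ n, N ≤ n → a n = a (n + l)) {m n : ℕ} (hm : N ≤ m) (hn : N ≤ n)
    (hmn : m ≡ n [MOD l]) : a m = a n := by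
  wlog hle : m ≤ n generalizing m n
  · exact (this hn hm hmn.symm (le_of_not_ge hle)).symm
  have hmul : ∀ t, a m = a (m + l * t) := by
    intro t
    induction t with
    | zero => rfl
    | succ t ih => rw [ih, h _ (by omega), mul_add_one, add_assoc]
  obtain ⟨t, ht⟩ := (Nat.modEq_iff_dvd' hle).mp hmn
  rw [hmul t, ← ht, Nat.add_sub_cancel' hle]

lemma exists_pow_add_eq_pow {M : Type*} [Monoid M] [Finite M] (x : M) :
    ∃ i p, 0 < p ∧ x ^ (i + p) = x ^ i := by
  obtain ⟨i, j, hne, h⟩ := Finite.exists_ne_map_eq_of_infinite (x ^ · : ℕ → M)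
  rcases hne.lt_or_gt with hij | hji
  · exact ⟨i, j - i, by omega, by rw [Nat.add_sub_cancel' hij.le]; exact h.symm⟩
  · exact ⟨j, i - j, by omega, by rw [Nat.add_sub_cancel' hji.le]; exact h⟩

lemma pow_add_mul_eq_pow {M : Type*} [Monoid M] {x : M} {i p : ℕ} (h : x ^ (i + p) = x ^ i)
    {W : ℕ} (hW : i ≤ W) (t : ℕ) : x ^ (W + t * p) = x ^ W := by
  induction t with
  | zero => simp
  | succ t ih =>
    calc x ^ (W + (t + 1) * p) = x ^ (W + t * p - i) * x ^ (i + p) := by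
          rw [← pow_add]; congr 1; rw [add_one_mul]; omega
      _ = x ^ W := by rw [h, ← pow_add, Nat.sub_add_cancel (by omega), ih]

section EventuallyPeriodic

variable {k L : ℕ} {κ : ℕ → ℕ → ZMod L} {N l i p : ℕ}

lemma kappa_one_add_mul_eq (hk : 1 < k)
    (hgtm : ∀ m n, N ≤ m → N ≤ n → (m : ZMod l) = n → gtm k L κ m = gtm k L κ n)
    (hip : (k : ZMod l) ^ (i + p) = (k : ZMod l) ^ i)
    {W : ℕ} (hiW : i ≤ W) (hN : N ≤ k ^ W) (t : ℕ) : κ 1 (W + t * p) = κ 1 W := by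
  have hkW : k ^ W ≤ k ^ (W + t * p) := Nat.pow_le_pow_right (by omega) (Nat.le_add_right _ _)
  rw [← gtm_pow_mul_digit κ hk (W + t * p) one_ne_zero hk,
    ← gtm_pow_mul_digit κ hk W one_ne_zero hk]
  refine hgtm _ _ (by omega) (by omega) ?_
  push_cast
  rw [pow_add_mul_eq_pow hip hiW t]

lemma gtm_pow_mul_eq_mul (hk : 1 < k) (hp : 0 < p)
    (hgtm : ∀ m n, N ≤ m → N ≤ n → (m : ZMod l) = n → gtm k L κ m = gtm k L κ n)
    (hip : (k : ZMod l) ^ (i + p) = (k : ZMod l) ^ i)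
    {W : ℕ} (hiW : i ≤ W) (hN : N ≤ k ^ W) (r : ℕ) : gtm k L κ (k ^ W * r) = r * κ 1 W := by
  induction r with
  | zero => simp
  | succ r ih =>
    have hr : r < k ^ (r * p) :=
      (Nat.lt_pow_self hk).trans_le (Nat.pow_le_pow_right (by omega) (Nat.le_mul_of_pos_right r hp))
    have hlt : k ^ W * r < k ^ (W + r * p) := by
      rw [pow_add]; exact Nat.mul_lt_mul_of_pos_left hr (by positivity)
    have hkW : k ^ W ≤ k ^ (W + r * p) := Nat.pow_le_pow_right (by omega) (Nat.le_add_right _ _)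
    calc gtm k L κ (k ^ W * (r + 1)) = gtm k L κ (k ^ W * r + k ^ (W + r * p) * 1) := by
          refine hgtm _ _ (hN.trans (Nat.le_mul_of_pos_right _ r.succ_pos)) (by omega) ?_
          push_cast
          rw [pow_add_mul_eq_pow hip hiW r]
          ring
      _ = gtm k L κ (k ^ W * r) + κ 1 (W + r * p) := gtm_add_pow_mul_digit κ hk hlt one_ne_zero hk
      _ = (r + 1 : ℕ) * κ 1 W := by
          rw [ih, kappa_one_add_mul_eq hk hgtm hip hiW hN]
          push_cast
          ring

theorem exists_linear_tail_of_eventually_periodic (hk : 1 < k) (hl : 0 < l)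
    (hper : ∀ n, N ≤ n → gtm k L κ n = gtm k L κ (n + l)) :
    ∃ A, ∀ s y, 1 ≤ s → s ≤ k - 1 → κ s (A + y) = κ 1 A * s * (k : ZMod L) ^ y := by
  have : NeZero l := ⟨hl.ne'⟩
  obtain ⟨i, p, hp, hip⟩ := exists_pow_add_eq_pow (k : ZMod l)
  have hgtm : ∀ m n, N ≤ m → N ≤ n → (m : ZMod l) = n → gtm k L κ m = gtm k L κ n :=
    fun m n hm hn h =>
      eq_of_modEq_of_periodic_from hper hm hn ((ZMod.natCast_eq_natCast_iff _ _ _).mp h)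
  set A := max i N
  have hmul : ∀ W, A ≤ W → ∀ r, gtm k L κ (k ^ W * r) = r * κ 1 W := fun W hW =>
    gtm_pow_mul_eq_mul hk hp hgtm hip (le_of_max_le_left hW)
      ((le_of_max_le_right hW).trans (Nat.lt_pow_self hk).le)
  have hdigit : ∀ W, A ≤ W → ∀ s, s ≠ 0 → s < k → κ s W = s * κ 1 W := fun W hW s hs0 hsk => by
    rw [← gtm_pow_mul_digit κ hk W hs0 hsk, hmul W hW]
  have hshift : ∀ W, A ≤ W → κ 1 (W + 1) = k * κ 1 W := fun W hW => by
    rw [← hmul W hW k, ← pow_succ, ← mul_one (k ^ (W + 1)), gtm_pow_mul_digit κ hk _ one_ne_zero hk]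
  have hone : ∀ y, κ 1 (A + y) = (k : ZMod L) ^ y * κ 1 A := by
    intro y
    induction y with
    | zero => simp
    | succ y ih => rw [← add_assoc, hshift _ (Nat.le_add_right _ _), ih, pow_succ']; ring
  refine ⟨A, fun s y hs1 hsk => ?_⟩
  rw [hdigit _ (Nat.le_add_right _ _) s (by omega) (by omega), hone]
  ring

end EventuallyPeriodic

theorem gtm_periodic_of_linear_tail {k L : ℕ} {κ : ℕ → ℕ → ZMod L} (hk : 1 < k) {A : ℕ}
    (hκ : ∀ s y, 1 ≤ s → s ≤ k - 1 → κ s (A + y) = κ 1 A * s * (k : ZMod L) ^ y) :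
    Function.Periodic (gtm k L κ) (k ^ A * L) := by
  intro n
  have hlin : ∀ q, gtm k L (fun s y => κ s (y + A)) q = κ 1 A * q := fun q =>
    gtm_eq_mul_of_linear hk (fun s y hs0 hsk => by
      rw [add_comm y A]; exact hκ s y (by omega) (by omega)) q
  have hm : n % k ^ A < k ^ A := Nat.mod_lt _ (pow_pos (by omega) A)
  have hsplit : n + k ^ A * L = n % k ^ A + k ^ A * (n / k ^ A + L) := by
    rw [mul_add, ← add_assoc, Nat.mod_add_div]
  conv_rhs => rw [← Nat.mod_add_div n (k ^ A)]
  rw [hsplit, gtm_add_pow_mul κ hk hm, gtm_add_pow_mul κ hk hm, hlin, hlin]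
  push_cast
  rw [ZMod.natCast_self, add_zero]

/-- the generalized Thue–Morse sequence is ultimately periodic iff
there is A with κ(s,A+y) ≡ κ(1,A)·s·kʸ (mod L) for all digits s and all y. -/
theorem stmt_11 (k L : ℕ) (hk : 1 < k) (hL : 1 < L) (κ : ℕ → ℕ → ZMod L) :
    (∃ N l : ℕ, 0 < l ∧ ∀ n : ℕ, N ≤ n → gtm k L κ n = gtm k L κ (n + l)) ↔
    (∃ A : ℕ, ∀ s y : ℕ, 1 ≤ s → s ≤ k - 1 →
      κ s (A + y) = κ 1 A * (s : ZMod L) * (k : ZMod L) ^ y) := by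
  constructor
  · rintro ⟨N, l, hl, hper⟩
    exact exists_linear_tail_of_eventually_periodic hk hl hper
  · rintro ⟨A, hκ⟩
    exact ⟨0, k ^ A * L, Nat.mul_pos (pow_pos (by omega) A) (by omega),
      fun n _ => (gtm_periodic_of_linear_tail hk hκ n).symm⟩
end

section
/- The Thue–Morse sequence t(n) = (number of 1s in the binary expansion of n) mod 2 is not ultimately periodic, and moreover every equally spaced subsequence (t(N + n·l))_{n≥0} with l > 0 is not ultimately periodic. -/
/-!
Write `s n` for the number of ones in the binary expansion of `n`. If `s` had constant parity
along an arithmetic progression `a + k * d` with `d > 0`, then taking `k = 2 ^ a * u` (so that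
the binary digits of `a` and of `u * d` do not interact) would make `s (u * d)` even for every
`u`. But for `d ≤ 2 ^ m`, the binary expansion of `d * (2 ^ m - 1)` is that of `d - 1` followed
by the complement of `d - 1` in `m` digits, so `s (d * (2 ^ m - 1)) = m`, which is odd for odd `m`.
-/

namespace Nat

def binaryDigitSum (n : ℕ) : ℕ := (digits 2 n).count 1

lemma binaryDigitSum_eq_binaryDigitSum_div_two_add (n : ℕ) :
    binaryDigitSum n = binaryDigitSum (n / 2) + n % 2 := by
  rcases n.eq_zero_or_pos with rfl | hn
  · rfl
  · rcases n.mod_two_eq_zero_or_one with h | h <;>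
      simp [binaryDigitSum, digits_def' one_lt_two hn, h]

lemma binaryDigitSum_two_pow_mul_add {K b : ℕ} (a : ℕ) (hb : b < 2 ^ K) :
    binaryDigitSum (2 ^ K * a + b) = binaryDigitSum a + binaryDigitSum b := by
  rcases a.eq_zero_or_pos with rfl | ha
  · simp [binaryDigitSum]
  have hlen : (digits 2 b).length ≤ K := (digits_length_le_iff one_lt_two b).2 hb
  have happend := digits_append_zeroes_append_digits (n := b) (k := K - (digits 2 b).length)
    one_lt_two ha
  rw [Nat.add_sub_cancel' hlen, add_comm b] at happend
  simp only [binaryDigitSum, ← happend, List.count_append, List.count_replicate]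
  simp [add_comm]

lemma binaryDigitSum_add_binaryDigitSum_two_pow_sub_one_sub {m x : ℕ} (hx : x < 2 ^ m) :
    binaryDigitSum x + binaryDigitSum (2 ^ m - 1 - x) = m := by
  induction m generalizing x with
  | zero => simp_all [binaryDigitSum]
  | succ m ih =>
    have hpow : 2 ^ (m + 1) = 2 * 2 ^ m := by ring
    have hhalf : (2 ^ (m + 1) - 1 - x) / 2 = 2 ^ m - 1 - x / 2 := by omega
    have hparity : (2 ^ (m + 1) - 1 - x) % 2 = 1 - x % 2 := by omega
    rw [binaryDigitSum_eq_binaryDigitSum_div_two_add x,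
      binaryDigitSum_eq_binaryDigitSum_div_two_add (2 ^ (m + 1) - 1 - x), hhalf, hparity]
    have := ih (x := x / 2) (by omega)
    omega

lemma binaryDigitSum_mul_two_pow_sub_one {d m : ℕ} (hd : 0 < d) (hdm : d ≤ 2 ^ m) :
    binaryDigitSum (d * (2 ^ m - 1)) = m := by
  have hsplit : d * (2 ^ m - 1) = 2 ^ m * (d - 1) + (2 ^ m - d) := by
    zify [hd, hdm, Nat.one_le_two_pow]
    ring
  have hcompl : 2 ^ m - 1 - (d - 1) = 2 ^ m - d := by omega
  rw [hsplit, binaryDigitSum_two_pow_mul_add _ (by omega), ← hcompl,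
    binaryDigitSum_add_binaryDigitSum_two_pow_sub_one_sub (by omega)]

lemma exists_binaryDigitSum_add_mul_mod_two_ne (a : ℕ) {d : ℕ} (hd : 0 < d) :
    ∃ k, binaryDigitSum (a + k * d) % 2 ≠ binaryDigitSum a % 2 := by
  set m := 2 * d + 1
  refine ⟨2 ^ a * (2 ^ m - 1), ?_⟩
  have hdm : d ≤ 2 ^ m := (Nat.lt_two_pow_self.trans_le' (by omega)).le
  have hrw : a + 2 ^ a * (2 ^ m - 1) * d = 2 ^ a * (d * (2 ^ m - 1)) + a := by ring
  rw [hrw, binaryDigitSum_two_pow_mul_add _ Nat.lt_two_pow_self,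
    binaryDigitSum_mul_two_pow_sub_one hd hdm]
  omega

lemma not_eventually_periodic_binaryDigitSum_add_mul_mod_two (N : ℕ) {l : ℕ} (hl : 0 < l) :
    ¬ ∃ M j : ℕ, 0 < j ∧ ∀ t : ℕ, M ≤ t →
      binaryDigitSum (N + t * l) % 2 = binaryDigitSum (N + (t + j) * l) % 2 := by
  rintro ⟨M, j, hj, hper⟩
  have hperiodic : Function.Periodic (fun k ↦ binaryDigitSum (N + (M + k) * l) % 2) j :=
    fun k ↦ by simpa only [add_assoc] using (hper (M + k) (by omega)).symm
  obtain ⟨k, hk⟩ := exists_binaryDigitSum_add_mul_mod_two_ne (N + M * l) (Nat.mul_pos hj hl)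
  apply hk
  simpa [add_mul, mul_assoc, add_assoc] using hperiodic.nat_mul_eq k

end Nat

/-- the Thue–Morse sequence t(n) = s₂(n) mod 2 is not ultimately
periodic, and every equally spaced subsequence (t(N + n·l))ₙ with l > 0 is not
ultimately periodic either. -/
theorem stmt_14 :
    (¬ ∃ N l : ℕ, 0 < l ∧ ∀ n : ℕ, N ≤ n →
      (Nat.digits 2 n).count 1 % 2 = (Nat.digits 2 (n + l)).count 1 % 2) ∧
    (∀ N l : ℕ, 0 < l →
      ¬ ∃ M j : ℕ, 0 < j ∧ ∀ t : ℕ, M ≤ t →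
        (Nat.digits 2 (N + t * l)).count 1 % 2 =
          (Nat.digits 2 (N + (t + j) * l)).count 1 % 2) := by
  refine ⟨fun ⟨N, l, hl, hper⟩ ↦ ?_,
    fun N l hl ↦ Nat.not_eventually_periodic_binaryDigitSum_add_mul_mod_two N hl⟩
  exact Nat.not_eventually_periodic_binaryDigitSum_add_mul_mod_two 0 one_pos
    ⟨N, l, hl, fun t ht ↦ by simpa [Nat.binaryDigitSum] using hper t ht⟩
end

section
/- Let k, L > 1 and κ : {1,…,k-1} × ℕ → ℤ/L, and let a be the generalized Thue–Morse sequence of type (L,k,κ). Then a is a k-automatic sequence if and only if κ is ultimately periodic in its second argument: there exist N ≥ 0 and t > 0 with κ(s, n) = κ(s, n+t) for all s ∈ {1,…,k-1} and all n ≥ N. -/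
open scoped BigOperators

/-!
The sum defining `a n = gtm k L κ n` runs over the base-`k` digits of `n`, so appending the
digits of `j < k ^ e` below those of `n` gives `a (k ^ e * n + j) = a j + a_e n`, where `a_e` is the
sequence of the same type built from `κ` shifted by `e` positions. Hence the `k`-kernel is finite
as soon as the shifted sequences `a_e` take finitely many values, which eventual periodicity of `κ`
guarantees. Conversely the kernel contains the subsequences `n ↦ a (k ^ e * n)`; two of them
coincide, say for `e < e'`, and evaluating at `n = s * k ^ m` yields `κ s (m + e) = κ s (m + e')`.
-/

theorem Set.finite_range_of_eventually_periodic {α : Type*} {f : ℕ → α} {N t : ℕ} (ht : 0 < t)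
    (hf : ∀ e, N ≤ e → f (e + t) = f e) : (Set.range f).Finite := by
  have hreduce : ∀ e, ∃ e' < N + t, f e = f e' := by
    intro e
    induction e using Nat.strong_induction_on with
    | _ e ih =>
      by_cases he : e < N + t
      · exact ⟨e, he, rfl⟩
      · obtain ⟨e', he', hfe⟩ := ih (e - t) (by omega)
        refine ⟨e', he', ?_⟩
        rw [← hfe, ← hf (e - t) (by omega), Nat.sub_add_cancel (by omega)]
  refine ((Set.finite_Iio (N + t)).image f).subset ?_
  rintro _ ⟨e, rfl⟩
  obtain ⟨e', he', hfe⟩ := hreduce e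
  exact ⟨e', he', hfe.symm⟩

def kKernel {α : Type*} (k : ℕ) (a : ℕ → α) : Set (ℕ → α) :=
  {g | ∃ e j : ℕ, j < k ^ e ∧ g = fun n => a (k ^ e * n + j)}

theorem exists_lt_forall_pow_mul_eq_of_finite_kKernel {α : Type*} {k : ℕ} (hk : 0 < k) {a : ℕ → α}
    (h : (kKernel k a).Finite) : ∃ e e', e < e' ∧ ∀ n, a (k ^ e * n) = a (k ^ e' * n) := by
  obtain ⟨e, e', hee', heq⟩ := h.exists_lt_map_eq_of_forall_mem
    (f := fun e n => a (k ^ e * n)) fun e => show _ ∈ kKernel k a from ⟨e, 0, pow_pos hk e, rfl⟩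
  exact ⟨e, e', hee', congrFun heq⟩

namespace GeneralizedThueMorse

variable {k L : ℕ}

def shift (κ : ℕ → ℕ → ZMod L) (e : ℕ) : ℕ → ℕ → ZMod L := fun s y => κ s (y + e)

@[simp]
theorem shift_zero (κ : ℕ → ℕ → ZMod L) : shift κ 0 = κ := rfl

theorem shift_shift (κ : ℕ → ℕ → ZMod L) (e e' : ℕ) : shift (shift κ e) e' = shift κ (e' + e) := by
  funext s y
  simp only [shift, add_assoc]

@[simp]
theorem gtm_zero (κ : ℕ → ℕ → ZMod L) : gtm k L κ 0 = 0 := by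
  simp [gtm]

theorem gtm_add_base_mul (hk : 1 < k) (κ : ℕ → ℕ → ZMod L) {r : ℕ} (hr : r < k) (m : ℕ) :
    gtm k L κ (r + k * m) = (if r ≠ 0 then κ r 0 else 0) + gtm k L (shift κ 1) m := by
  by_cases hrm : r ≠ 0 ∨ m ≠ 0
  · rw [gtm, Nat.digits_add k hk r m hr hrm, List.length_cons, Finset.sum_range_succ', add_comm]
    simp [gtm, shift]
  · obtain ⟨rfl, rfl⟩ : r = 0 ∧ m = 0 := by omega
    simp

theorem gtm_base_pow_mul_add (hk : 1 < k) (e : ℕ) (κ : ℕ → ℕ → ZMod L) {j : ℕ} (hj : j < k ^ e)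
    (n : ℕ) : gtm k L κ (k ^ e * n + j) = gtm k L κ j + gtm k L (shift κ e) n := by
  induction e generalizing κ j with
  | zero =>
    obtain rfl : j = 0 := by simpa using hj
    simp
  | succ e ih =>
    have hr : j % k < k := Nat.mod_lt _ (by omega)
    have hq : j / k < k ^ e := Nat.div_lt_of_lt_mul (by rwa [← pow_succ'])
    have hsplit : k ^ (e + 1) * n + j = j % k + k * (k ^ e * n + j / k) := by
      rw [pow_succ', mul_add, mul_assoc, ← Nat.mod_add_div j k]
      simp only [Nat.add_mul_div_left _ _ (by omega : 0 < k), Nat.add_mul_mod_self_left,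
        Nat.mod_mod, Nat.mod_div_self, zero_add]
      ring
    rw [hsplit, gtm_add_base_mul hk κ hr, ih (shift κ 1) hq, shift_shift, ← add_assoc,
      ← gtm_add_base_mul hk κ hr, Nat.mod_add_div]

theorem gtm_mul_base_pow (hk : 1 < k) (κ : ℕ → ℕ → ZMod L) {s : ℕ} (hs0 : s ≠ 0) (hs : s < k)
    (m : ℕ) : gtm k L κ (s * k ^ m) = κ s m := by
  have h := gtm_base_pow_mul_add hk m κ (pow_pos (by omega) m) s
  rw [add_zero, gtm_zero, zero_add, mul_comm] at h
  rw [h, ← add_zero s, ← mul_zero k, gtm_add_base_mul hk _ hs]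
  simp [hs0, shift]

theorem gtm_congr (hk : 1 < k) {κ κ' : ℕ → ℕ → ZMod L}
    (h : ∀ s, s ≠ 0 → s < k → ∀ y, κ s y = κ' s y) (n : ℕ) : gtm k L κ n = gtm k L κ' n := by
  refine Finset.sum_congr rfl fun y hy => ?_
  have hmem : (Nat.digits k n).getD y 0 ∈ Nat.digits k n := by
    rw [List.getD_eq_getElem _ _ (Finset.mem_range.mp hy)]
    exact List.getElem_mem _
  split_ifs with h0
  · exact h _ h0 (Nat.digits_lt_base hk hmem) y
  · rfl

theorem eventually_periodic_of_finite_kKernel (hk : 1 < k) {κ : ℕ → ℕ → ZMod L}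
    (h : (kKernel k (gtm k L κ)).Finite) :
    ∃ N t : ℕ, 0 < t ∧ ∀ s, s ≠ 0 → s < k → ∀ n, N ≤ n → κ s n = κ s (n + t) := by
  obtain ⟨e, e', hee', heq⟩ := exists_lt_forall_pow_mul_eq_of_finite_kKernel (by omega) h
  refine ⟨e, e' - e, by omega, fun s hs0 hs n hn => ?_⟩
  have hm := heq (s * k ^ (n - e))
  rwa [mul_left_comm, ← pow_add, mul_left_comm, ← pow_add, gtm_mul_base_pow hk κ hs0 hs,
    gtm_mul_base_pow hk κ hs0 hs, show e + (n - e) = n by omega,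
    show e' + (n - e) = n + (e' - e) by omega] at hm

theorem finite_kKernel_of_eventually_periodic (hk : 1 < k) (hL : L ≠ 0) {κ : ℕ → ℕ → ZMod L}
    {N t : ℕ} (ht : 0 < t) (h : ∀ s, s ≠ 0 → s < k → ∀ n, N ≤ n → κ s n = κ s (n + t)) :
    (kKernel k (gtm k L κ)).Finite := by
  have : NeZero L := ⟨hL⟩
  have hshift : ∀ e, N ≤ e → gtm k L (shift κ (e + t)) = gtm k L (shift κ e) := fun e he =>
    funext <| gtm_congr hk fun s hs0 hs y => by
      rw [shift, shift, ← add_assoc, h s hs0 hs (y + e) (by omega)]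
  have hfin := Set.finite_range_of_eventually_periodic (f := fun e => gtm k L (shift κ e)) ht hshift
  refine (Set.finite_univ.image2 (fun c g n => c + g n) hfin).subset ?_
  rintro _ ⟨e, j, hj, rfl⟩
  exact ⟨gtm k L κ j, trivial, _, ⟨e, rfl⟩, funext fun n => (gtm_base_pow_mul_add hk e κ hj n).symm⟩

end GeneralizedThueMorse

/-- the generalized Thue–Morse sequence is k-automatic (its k-kernel
is finite) iff κ is ultimately periodic in its second argument. -/
theorem stmt_16 (k L : ℕ) (hk : 1 < k) (hL : 1 < L) (κ : ℕ → ℕ → ZMod L) :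
    {g : ℕ → ZMod L | ∃ e j : ℕ, j < k ^ e ∧
        g = fun n => gtm k L κ (k ^ e * n + j)}.Finite ↔
    (∃ N t : ℕ, 0 < t ∧ ∀ s : ℕ, 1 ≤ s → s ≤ k - 1 →
      ∀ n : ℕ, N ≤ n → κ s n = κ s (n + t)) := by
  change (kKernel k (gtm k L κ)).Finite ↔ _
  constructor
  · intro hfin
    obtain ⟨N, t, ht, hper⟩ := GeneralizedThueMorse.eventually_periodic_of_finite_kKernel hk hfin
    exact ⟨N, t, ht, fun s hs1 hsk => hper s (by omega) (by omega)⟩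
  · rintro ⟨N, t, ht, hper⟩
    exact GeneralizedThueMorse.finite_kKernel_of_eventually_periodic hk (by omega) ht
      fun s hs0 hsk => hper s (by omega) (by omega)
end

section
/- Let a : ℕ → ℂ be a k-adic expansion sequence with coefficients t_{s,y} ≠ 0, and suppose there exist N ≥ 0, l > 0 with a(N + t·l) = a(N) for all t ≥ 0. Then a(k^r · t · l) = 1 for all t ≥ 0 and all r greater than the largest exponent in the base-k expansion of N. -/
open scoped BigOperators

/-- The k-adic expansion sequence determined by the nonzero coefficients t_{s,y}:
a(0) = 1 and a(n) = ∏_q t_{s_q, w_q} over the nonzero base-k digits of n. -/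
def kadicSeq (k : ℕ) (t : ℕ → ℕ → ℂ) (n : ℕ) : ℂ :=
  ∏ y ∈ Finset.range (Nat.digits k n).length,
    if (Nat.digits k n).getD y 0 ≠ 0 then t ((Nat.digits k n).getD y 0) y else 1

/-!
Writing `N + kʳ·x` in base `k` with `r` at least the number of digits of `N`, the digits of `N`
and of `kʳ·x` occupy disjoint positions, so `a(N + kʳ·x) = a(N)·a(kʳ·x)`. Applied with
`x = m·l`, periodicity gives `a(N)·a(kʳ·m·l) = a(N)`, and `a(N) ≠ 0` since all `t_{s,y} ≠ 0`.
-/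

section DigitProd

variable {M : Type*} [CommMonoid M]

def digitProd (t : ℕ → ℕ → M) (L : List ℕ) : M :=
  ∏ y ∈ Finset.range L.length, if L.getD y 0 ≠ 0 then t (L.getD y 0) y else 1

theorem digitProd_append (t : ℕ → ℕ → M) (L₁ L₂ : List ℕ) :
    digitProd t (L₁ ++ L₂) = digitProd t L₁ * digitProd (fun s y => t s (L₁.length + y)) L₂ := by
  unfold digitProd
  rw [List.length_append, Finset.prod_range_add]
  congr 1
  · refine Finset.prod_congr rfl fun y hy => ?_
    rw [List.getD_append _ _ _ _ (Finset.mem_range.mp hy)]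
  · refine Finset.prod_congr rfl fun y _ => ?_
    rw [List.getD_append_right _ _ _ _ (Nat.le_add_right _ _), Nat.add_sub_cancel_left]

theorem digitProd_replicate_zero (t : ℕ → ℕ → M) (p : ℕ) :
    digitProd t (List.replicate p 0) = 1 :=
  Finset.prod_eq_one fun y hy => by
    rw [List.getD_replicate _ (by simpa using hy), if_neg (not_not.mpr rfl)]

theorem digitProd_replicate_zero_append (t : ℕ → ℕ → M) (p : ℕ) (L : List ℕ) :
    digitProd t (List.replicate p 0 ++ L) = digitProd (fun s y => t s (p + y)) L := by
  rw [digitProd_append, digitProd_replicate_zero, List.length_replicate, one_mul]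

end DigitProd

theorem kadicSeq_eq_digitProd (k : ℕ) (t : ℕ → ℕ → ℂ) (n : ℕ) :
    kadicSeq k t n = digitProd t (Nat.digits k n) := rfl

theorem kadicSeq_zero (k : ℕ) (t : ℕ → ℕ → ℂ) : kadicSeq k t 0 = 1 := by
  simp [kadicSeq]

theorem kadicSeq_ne_zero (k : ℕ) {t : ℕ → ℕ → ℂ} (ht : ∀ s y, t s y ≠ 0) (n : ℕ) :
    kadicSeq k t n ≠ 0 :=
  Finset.prod_ne_zero_iff.mpr fun _ _ => by split <;> simp [ht]

theorem kadicSeq_add_base_pow_mul {k : ℕ} (hk : 1 < k) (t : ℕ → ℕ → ℂ) {N r : ℕ}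
    (hr : (Nat.digits k N).length ≤ r) (x : ℕ) :
    kadicSeq k t (N + k ^ r * x) = kadicSeq k t N * kadicSeq k t (k ^ r * x) := by
  rcases Nat.eq_zero_or_pos x with rfl | hx
  · simp [kadicSeq_zero]
  obtain ⟨p, rfl⟩ := Nat.exists_eq_add_of_le hr
  rw [kadicSeq_eq_digitProd, kadicSeq_eq_digitProd, kadicSeq_eq_digitProd,
    ← Nat.digits_append_zeroes_append_digits hk hx, Nat.digits_base_pow_mul hk hx,
    List.append_assoc, digitProd_append, digitProd_replicate_zero_append,
    digitProd_replicate_zero_append]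
  simp only [Nat.add_assoc]

theorem stmt_18_general (k : ℕ) (hk : 1 < k) (t : ℕ → ℕ → ℂ) (ht : ∀ s y, t s y ≠ 0)
    (N l : ℕ)
    (hper : ∀ m : ℕ, kadicSeq k t (N + m * l) = kadicSeq k t N) :
    ∀ r : ℕ, (Nat.digits k N).length ≤ r →
      ∀ m : ℕ, kadicSeq k t (k ^ r * m * l) = 1 := by
  intro r hr m
  have hsplit := kadicSeq_add_base_pow_mul hk t hr (m * l)
  rw [← Nat.mul_assoc, hper] at hsplit
  exact (mul_eq_left₀ (kadicSeq_ne_zero k ht N)).mp hsplit.symm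

/-- if a is a k-adic expansion sequence and the equally spaced
subsequence (a(N + t·l))_t is constant, then a(kʳ·t·l) = 1 for all t ≥ 0 and all r
greater than the largest exponent in the base-k expansion of N (i.e. r ≥ the number
of base-k digits of N). -/
theorem stmt_18 (k : ℕ) (hk : 1 < k) (t : ℕ → ℕ → ℂ) (ht : ∀ s y, t s y ≠ 0)
    (N l : ℕ) (hl : 0 < l)
    (hper : ∀ m : ℕ, kadicSeq k t (N + m * l) = kadicSeq k t N) :
    ∀ r : ℕ, (Nat.digits k N).length ≤ r →
      ∀ m : ℕ, kadicSeq k t (k ^ r * m * l) = 1 :=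
  stmt_18_general k hk t ht N l hper
end
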